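/- arXiv:2509.15917 — 2 statements merged into one kernel-verified Lean document; each statement's English description precedes it below -/
import Mathlib

section
/- Let H ⊆ ℝ^p and O ⊆ ℝ^p be nonempty sets with vertex sets (finite point sets) V_H and V_O such that H = conv(V_H) and O = conv(V_O), and let δ > 0. Then dist(O, H) ≥ δ if and only if there exist μ_r, μ_o ∈ ℝ and ξ ∈ ℝ^p satisfying: μ_r + μ_o + (1/4)ξᵀξ + δ² ≤ 0; −vᵀξ − μ_r ≤ 0 for every v ∈ V_H; and wᵀξ − μ_o ≤ 0 for every w ∈ V_O. -/
open scoped RealInnerProductSpace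
set_option maxHeartbeats 1000000

/-- Variational inequality for a minimizer of distance over a convex set. -/
lemma min_inner_le_zero {F : Type*} [NormedAddCommGroup F] [InnerProductSpace ℝ F]
    {K : Set F} (hK : Convex ℝ K) {u v : F} (hv : v ∈ K)
    (hmin : ∀ w ∈ K, ‖u - v‖ ≤ ‖u - w‖) : ∀ w ∈ K, ⟪u - v, w - v⟫ ≤ 0 := by
  rw [← norm_eq_iInf_iff_real_inner_le_zero hK hv]
  haveI : Nonempty K := ⟨⟨v, hv⟩⟩
  apply le_antisymm
  · exact le_ciInf fun w => hmin w w.2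
  · exact ciInf_le ⟨0, fun _ ⟨_, h⟩ => h ▸ norm_nonneg _⟩ (⟨v, hv⟩ : K)

/-- Collision-multiplier reformulation of polytope-polytope separation
with margin δ (Lemma 1 of the paper). -/
theorem collision_multiplier_iff (p : ℕ)
    (VH VO : Finset (EuclideanSpace ℝ (Fin p)))
    (hVH : VH.Nonempty) (hVO : VO.Nonempty)
    (H O : Set (EuclideanSpace ℝ (Fin p)))
    (hH : H = convexHull ℝ (VH : Set (EuclideanSpace ℝ (Fin p))))
    (hO : O = convexHull ℝ (VO : Set (EuclideanSpace ℝ (Fin p))))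
    (δ : ℝ) (hδ : 0 < δ) :
    (∀ o ∈ O, ∀ h ∈ H, δ ≤ dist o h) ↔
    ∃ (μr μo : ℝ) (ξ : EuclideanSpace ℝ (Fin p)),
      μr + μo + (1 / 4) * ⟪ξ, ξ⟫ + δ ^ 2 ≤ 0 ∧
      (∀ v ∈ VH, -⟪v, ξ⟫ - μr ≤ 0) ∧
      (∀ w ∈ VO, ⟪w, ξ⟫ - μo ≤ 0) := by
  have hHconv : Convex ℝ H := hH ▸ convex_convexHull ℝ _
  have hOconv : Convex ℝ O := hO ▸ convex_convexHull ℝ _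
  constructor
  · -- forward: construct multipliers from nearest points
    intro hsep
    have hHc : IsCompact H := hH ▸ (VH.finite_toSet.isCompact_convexHull ℝ)
    have hOc : IsCompact O := hO ▸ (VO.finite_toSet.isCompact_convexHull ℝ)
    obtain ⟨x₀, hx₀⟩ := hVH
    obtain ⟨y₀, hy₀⟩ := hVO
    have hHne : H.Nonempty := ⟨x₀, hH ▸ subset_convexHull ℝ _ hx₀⟩
    have hOne : O.Nonempty := ⟨y₀, hO ▸ subset_convexHull ℝ _ hy₀⟩
    have hprod : IsCompact (O ×ˢ H) := hOc.prod hHc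
    have hprodne : (O ×ˢ H).Nonempty := hOne.prod hHne
    have hcont : ContinuousOn (fun x : EuclideanSpace ℝ (Fin p) × EuclideanSpace ℝ (Fin p) =>
        ‖x.1 - x.2‖) (O ×ˢ H) := (continuous_fst.sub continuous_snd).norm.continuousOn
    obtain ⟨⟨o₀, h₀⟩, hmem, hmin⟩ := hprod.exists_isMinOn hprodne hcont
    obtain ⟨ho₀, hh₀⟩ := hmem
    set u := h₀ - o₀ with hu
    have hmin' : ∀ o ∈ O, ∀ h ∈ H, ‖o₀ - h₀‖ ≤ ‖o - h‖ := fun o ho h hh =>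
      isMinOn_iff.mp hmin (o, h) (Set.mk_mem_prod ho hh)
    -- variational inequalities
    have hVI_O : ∀ w ∈ O, ⟪h₀ - o₀, w - o₀⟫ ≤ 0 := by
      apply min_inner_le_zero hOconv ho₀
      intro w hw
      calc ‖h₀ - o₀‖ = ‖o₀ - h₀‖ := norm_sub_rev _ _
        _ ≤ ‖w - h₀‖ := hmin' w hw h₀ hh₀
        _ = ‖h₀ - w‖ := norm_sub_rev _ _
    have hVI_H : ∀ v ∈ H, ⟪o₀ - h₀, v - h₀⟫ ≤ 0 := by
      apply min_inner_le_zero hHconv hh₀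
      intro v hv
      exact hmin' o₀ ho₀ v hv
    have hd : δ ≤ ‖h₀ - o₀‖ := by
      have := hsep o₀ ho₀ h₀ hh₀
      rwa [dist_eq_norm, ← norm_sub_rev] at this
    refine ⟨-⟪h₀, (2 : ℝ) • u⟫, ⟪o₀, (2 : ℝ) • u⟫, (2 : ℝ) • u, ?_, ?_, ?_⟩
    · have h1 : ⟪(2:ℝ) • u, (2:ℝ) • u⟫ = 4 * ⟪u, u⟫ := by
        rw [real_inner_smul_left, real_inner_smul_right]; ring
      have h2 : -⟪h₀, (2:ℝ) • u⟫ + ⟪o₀, (2:ℝ) • u⟫ = -2 * ⟪u, u⟫ := by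
        rw [real_inner_smul_right, real_inner_smul_right]
        have : ⟪h₀, u⟫ - ⟪o₀, u⟫ = ⟪u, u⟫ := by
          rw [← inner_sub_left]
        nlinarith [this]
      have h3 : δ ^ 2 ≤ ⟪u, u⟫ := by
        rw [real_inner_self_eq_norm_sq]
        exact pow_le_pow_left₀ hδ.le hd 2
      nlinarith [h1, h2, h3]
    · intro v hv
      have hvH : v ∈ H := hH ▸ subset_convexHull ℝ _ hv
      have := hVI_H v hvH
      rw [inner_sub_left, inner_sub_right, inner_sub_right] at this
      rw [real_inner_smul_right, real_inner_smul_right]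
      have huo : ⟪o₀ - h₀, v⟫ = ⟪o₀, v⟫ - ⟪h₀, v⟫ := inner_sub_left _ _ _
      simp only [hu]
      rw [inner_sub_right, inner_sub_right]
      nlinarith [this, real_inner_comm v h₀, real_inner_comm v o₀, real_inner_comm h₀ o₀]
    · intro w hw
      have hwO : w ∈ O := hO ▸ subset_convexHull ℝ _ hw
      have := hVI_O w hwO
      rw [inner_sub_left, inner_sub_right, inner_sub_right] at this
      rw [real_inner_smul_right, real_inner_smul_right]
      simp only [hu]
      rw [inner_sub_right, inner_sub_right]
      nlinarith [this, real_inner_comm w h₀, real_inner_comm w o₀, real_inner_comm h₀ o₀]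
  · -- backward: multipliers imply separation
    rintro ⟨μr, μo, ξ, hμ, hHineq, hOineq⟩
    intro o ho h hh
    have hlin : IsLinearMap ℝ (fun x : EuclideanSpace ℝ (Fin p) => ⟪x, ξ⟫) :=
      ⟨fun a b => inner_add_left a b ξ, fun c x => real_inner_smul_left x ξ c⟩
    -- ⟪h, ξ⟫ ≥ -μr on H
    have hHbound : ⟪h, ξ⟫ ≥ -μr := by
      have hsub : H ⊆ {x | -μr ≤ ⟪x, ξ⟫} := by
        rw [hH]
        apply convexHull_min
        · intro v hv
          have := hHineq v hv
          simp only [Set.mem_setOf_eq]; linarith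
        · exact convex_halfSpace_ge hlin (-μr)
      exact hsub hh
    have hObound : ⟪o, ξ⟫ ≤ μo := by
      have hsub : O ⊆ {x | ⟪x, ξ⟫ ≤ μo} := by
        rw [hO]
        apply convexHull_min
        · intro w hw
          have := hOineq w hw
          simp only [Set.mem_setOf_eq]; linarith
        · exact convex_halfSpace_le hlin μo
      exact hsub ho
    have hkey : δ ^ 2 + (1/4) * ‖ξ‖ ^ 2 ≤ ⟪h - o, ξ⟫ := by
      rw [inner_sub_left]
      have : ⟪ξ, ξ⟫ = ‖ξ‖ ^ 2 := real_inner_self_eq_norm_sq ξ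
      linarith [hμ, hHbound, hObound]
    have hCS : ⟪h - o, ξ⟫ ≤ ‖h - o‖ * ‖ξ‖ := real_inner_le_norm _ _
    rw [dist_eq_norm, ← norm_sub_rev]
    have hn : (0:ℝ) ≤ ‖h - o‖ := norm_nonneg _
    have h2 : δ ^ 2 + (1/4) * ‖ξ‖ ^ 2 ≤ ‖h - o‖ * ‖ξ‖ := le_trans hkey hCS
    have ht : (0:ℝ) < ‖ξ‖ := by
      rcases eq_or_lt_of_le (norm_nonneg ξ) with he | h'
      · exfalso; nlinarith [h2, sq_nonneg ‖ξ‖]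
      · exact h'
    nlinarith [sq_nonneg (δ - ‖ξ‖ / 2), h2, mul_pos (sub_pos.mpr hδ) ht]
end

section
/- Let H, O ⊆ ℝ^p be compact convex sets with dist(O, H) ≥ δ for some δ > 0. Then there exist ξ ∈ ℝ^p and μ_r, μ_o ∈ ℝ such that μ_r + μ_o + (1/4)‖ξ‖² + δ² ≤ 0, −hᵀξ ≤ μ_r for all h ∈ H, and oᵀξ ≤ μ_o for all o ∈ O. -/
open scoped RealInnerProductSpace

lemma proj_inner_le (p : ℕ) (K : Set (EuclideanSpace ℝ (Fin p)))
    (hK : Convex ℝ K) (u z : EuclideanSpace ℝ (Fin p)) (hz : z ∈ K)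
    (hmin : ∀ w ∈ K, ‖u - z‖ ≤ ‖u - w‖) :
    ∀ w ∈ K, ⟪u - z, w - z⟫ ≤ 0 := by
  intro w hw
  by_contra hc
  push_neg at hc
  set c : ℝ := ⟪u - z, w - z⟫ with hcdef
  have hn0 : (0 : ℝ) < ‖w - z‖ ^ 2 := by
    rcases eq_or_ne w z with rfl | hne
    · simp [hcdef] at hc
    · have h1 : w - z ≠ 0 := sub_ne_zero.mpr hne
      have h2 : 0 < ‖w - z‖ := norm_pos_iff.mpr h1
      positivity
  set n : ℝ := ‖w - z‖ ^ 2 with hndef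
  set t : ℝ := min 1 (c / n) with htdef
  have ht0 : 0 < t := lt_min one_pos (div_pos hc hn0)
  have ht1 : t ≤ 1 := min_le_left _ _
  have htn : t * n ≤ c := by
    have : t ≤ c / n := min_le_right _ _
    calc t * n ≤ (c / n) * n := by nlinarith
    _ = c := by field_simp
  have hmem : z + t • (w - z) ∈ K := by
    have := hK hz hw (by linarith : (0:ℝ) ≤ 1 - t) ht0.le (by ring)
    have he : (1 - t) • z + t • w = z + t • (w - z) := by
      rw [smul_sub]; module
    rwa [he] at this
  have hle : ‖u - z‖ ≤ ‖u - (z + t • (w - z))‖ := hmin _ hmem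
  have hsq : ‖u - (z + t • (w - z))‖ ^ 2 = ‖u - z‖ ^ 2 - 2 * t * c + t ^ 2 * n := by
    have he : u - (z + t • (w - z)) = (u - z) - t • (w - z) := by abel
    rw [he, hndef, hcdef]
    rw [norm_sub_sq_real, real_inner_smul_right, norm_smul]
    simp [abs_of_pos ht0]
    ring
  have hsq' : ‖u - z‖ ^ 2 ≤ ‖u - (z + t • (w - z))‖ ^ 2 :=
    pow_le_pow_left₀ (norm_nonneg _) hle 2
  rw [hsq] at hsq'
  have h2c : 2 * c ≤ t * n := by
    have h0 : 0 ≤ -2 * t * c + t ^ 2 * n := by linarith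
    have : t * (2 * c) ≤ t * (t * n) := by nlinarith
    exact le_of_mul_le_mul_left this ht0
  linarith

/-- Necessity direction: compact convex sets at distance at least δ
admit collision multipliers satisfying the quadratic inequality. -/
theorem collision_multiplier_exists (p : ℕ)
    (H O : Set (EuclideanSpace ℝ (Fin p)))
    (hHc : IsCompact H) (hOc : IsCompact O)
    (hHconv : Convex ℝ H) (hOconv : Convex ℝ O)
    (hHne : H.Nonempty) (hOne : O.Nonempty)
    (δ : ℝ) (hδ : 0 < δ)
    (hdist : ∀ o ∈ O, ∀ h ∈ H, δ ≤ dist o h) :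
    ∃ (ξ : EuclideanSpace ℝ (Fin p)) (μr μo : ℝ),
      μr + μo + (1 / 4) * ‖ξ‖ ^ 2 + δ ^ 2 ≤ 0 ∧
      (∀ h ∈ H, -⟪h, ξ⟫ ≤ μr) ∧
      (∀ o ∈ O, ⟪o, ξ⟫ ≤ μo) := by
  obtain ⟨⟨os, hs⟩, hmem, hminOn⟩ :=
    (hOc.prod hHc).exists_isMinOn (hOne.prod hHne)
      continuous_dist.continuousOn
  obtain ⟨hosO, hhsH⟩ := hmem
  set v : EuclideanSpace ℝ (Fin p) := os - hs with hv
  have hminH : ∀ w ∈ H, ‖os - hs‖ ≤ ‖os - w‖ := by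
    intro w hw
    have := hminOn (Set.mk_mem_prod hosO hw)
    simpa [dist_eq_norm] using this
  have hminO : ∀ w ∈ O, ‖hs - os‖ ≤ ‖hs - w‖ := by
    intro w hw
    have := hminOn (Set.mk_mem_prod hw hhsH)
    rw [norm_sub_rev hs os, norm_sub_rev hs w]
    simpa [dist_eq_norm] using this
  have hH := proj_inner_le p H hHconv os hs hhsH hminH
  have hO := proj_inner_le p O hOconv hs os hosO hminO
  have hdd : δ ≤ ‖v‖ := by
    have := hdist os hosO hs hhsH
    simpa [dist_eq_norm, hv] using this
  refine ⟨(-2 : ℝ) • v, 2 * ⟪hs, v⟫, -(2 * ⟪os, v⟫), ?_, ?_, ?_⟩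
  · have hnv : ‖(-2 : ℝ) • v‖ ^ 2 = 4 * ‖v‖ ^ 2 := by
      rw [norm_smul]; simp; ring
    rw [hnv]
    have h1 : ⟪hs, v⟫ - ⟪os, v⟫ = -‖v‖ ^ 2 := by
      rw [← inner_sub_left]
      have : hs - os = -v := by simp [hv]
      rw [this, inner_neg_left, real_inner_self_eq_norm_sq]
    have h2 : δ ^ 2 ≤ ‖v‖ ^ 2 := by
      apply pow_le_pow_left₀ hδ.le hdd 2
    nlinarith [h1, h2]
  · intro h hh
    have hi : ⟪h, (-2 : ℝ) • v⟫ = -2 * ⟪h, v⟫ := real_inner_smul_right _ _ _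
    rw [hi]
    have e1 : ⟪v, h⟫ - ⟪v, hs⟫ ≤ 0 := by
      have := hH h hh
      rw [← hv, inner_sub_right] at this
      linarith
    have c1 : ⟪v, h⟫ = ⟪h, v⟫ := real_inner_comm _ _
    have c2 : ⟪v, hs⟫ = ⟪hs, v⟫ := real_inner_comm _ _
    linarith
  · intro o ho
    have hi : ⟪o, (-2 : ℝ) • v⟫ = -2 * ⟪o, v⟫ := real_inner_smul_right _ _ _
    rw [hi]
    have e1 : ⟪-v, o⟫ - ⟪-v, os⟫ ≤ 0 := by
      have := hO o ho
      have e2 : hs - os = -v := by simp [hv]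
      rw [e2, inner_sub_right] at this
      linarith
    rw [inner_neg_left, inner_neg_left] at e1
    have c1 : ⟪v, o⟫ = ⟪o, v⟫ := real_inner_comm _ _
    have c2 : ⟪v, os⟫ = ⟪os, v⟫ := real_inner_comm _ _
    linarith
end
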